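/- Let f, g : [0,1] → [0,1] be normal and convex. Then (f ⊔ g)^L = f^L ∧ g^L (pointwise minimum) and (f ⊔ g)^R = f^R ∨ g^R (pointwise maximum). -/
import Mathlib


open unitInterval

instance : Fact ((0:ℝ) ≤ 1) := ⟨zero_le_one⟩

/-- `f^L x = sup {f y : y ≤ x}` -/
noncomputable def fL (f : I → I) (x : I) : I := sSup (f '' {y | y ≤ x})

/-- `f^R x = sup {f y : y ≥ x}` -/
noncomputable def fR (f : I → I) (x : I) : I := sSup (f '' {y | x ≤ y})

/-- join convolution `(f ⊔ g)(x) = sup { min (f y) (g z) : max y z = x }` -/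
noncomputable def joinConv (f g : I → I) (x : I) : I :=
  sSup {v | ∃ y z, y ⊔ z = x ∧ v = f y ⊓ g z}

theorem stmt_10 (f g : I → I)
    (hnf : sSup (Set.range f) = 1) (hng : sSup (Set.range g) = 1)
    (hcf : ∀ x y z : I, x ≤ y → y ≤ z → f x ⊓ f z ≤ f y)
    (hcg : ∀ x y z : I, x ≤ y → y ≤ z → g x ⊓ g z ≤ g y) :
    (∀ x, fL (joinConv f g) x = fL f x ⊓ fL g x) ∧
    (∀ x, fR (joinConv f g) x = fR f x ⊔ fR g x) := by
  constructor
  · intro x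
    refine le_antisymm ?_ ?_
    · refine sSup_le ?_
      rintro v ⟨w, hw, rfl⟩
      refine sSup_le ?_
      rintro v ⟨y, z, hyz, rfl⟩
      have hy : y ≤ x := le_trans (hyz ▸ le_sup_left) hw
      have hz : z ≤ x := le_trans (hyz ▸ le_sup_right) hw
      exact inf_le_inf (le_sSup ⟨y, hy, rfl⟩) (le_sSup ⟨z, hz, rfl⟩)
    · refine le_of_forall_lt fun c hc => ?_
      obtain ⟨hcf', hcg'⟩ := lt_inf_iff.mp hc
      obtain ⟨a, ⟨y, hy, rfl⟩, hca⟩ := lt_sSup_iff.mp hcf'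
      obtain ⟨b, ⟨z, hz, rfl⟩, hcb⟩ := lt_sSup_iff.mp hcg'
      calc c < f y ⊓ g z := lt_inf_iff.mpr ⟨hca, hcb⟩
        _ ≤ joinConv f g (y ⊔ z) := le_sSup ⟨y, z, rfl, rfl⟩
        _ ≤ fL (joinConv f g) x := le_sSup ⟨y ⊔ z, show y ⊔ z ≤ x from sup_le hy hz, rfl⟩
  · intro x
    refine le_antisymm ?_ ?_
    · refine sSup_le ?_
      rintro v ⟨w, hw, rfl⟩
      refine sSup_le ?_
      rintro v ⟨y, z, hyz, rfl⟩
      have hx : x ≤ y ⊔ z := hyz ▸ hw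
      rcases le_sup_iff.mp hx with h | h
      · exact le_sup_of_le_left (inf_le_left.trans (le_sSup ⟨y, h, rfl⟩))
      · exact le_sup_of_le_right (inf_le_right.trans (le_sSup ⟨z, h, rfl⟩))
    · refine sup_le ?_ ?_
      · refine sSup_le ?_
        rintro v ⟨y, hy, rfl⟩
        refine le_of_forall_lt fun c hc => ?_
        have hc1 : c < sSup (Set.range g) := by
          rw [hng]; exact lt_of_lt_of_le hc le_top
        obtain ⟨b, ⟨z, rfl⟩, hcb⟩ := lt_sSup_iff.mp hc1
        calc c < f y ⊓ g z := lt_inf_iff.mpr ⟨hc, hcb⟩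
          _ ≤ joinConv f g (y ⊔ z) := le_sSup ⟨y, z, rfl, rfl⟩
          _ ≤ fR (joinConv f g) x := le_sSup ⟨y ⊔ z, show x ≤ y ⊔ z from le_sup_of_le_left hy, rfl⟩
      · refine sSup_le ?_
        rintro v ⟨z, hz, rfl⟩
        refine le_of_forall_lt fun c hc => ?_
        have hc1 : c < sSup (Set.range f) := by
          rw [hnf]; exact lt_of_lt_of_le hc le_top
        obtain ⟨a, ⟨y, rfl⟩, hca⟩ := lt_sSup_iff.mp hc1
        calc c < f y ⊓ g z := lt_inf_iff.mpr ⟨hca, hc⟩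
          _ ≤ joinConv f g (y ⊔ z) := le_sSup ⟨y, z, rfl, rfl⟩
          _ ≤ fR (joinConv f g) x := le_sSup ⟨y ⊔ z, show x ≤ y ⊔ z from le_sup_of_le_right hz, rfl⟩
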